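/- arXiv:1203.0050 — 4 statements merged into one kernel-verified Lean document; each statement's English description precedes it below -/
import Mathlib

section
/- Let the strategy profile (M, r) of the Mafia Hitting Set Game be a pure Nash equilibrium. Then M is a hitting set (M ∩ S ≠ ∅ for every S ∈ 𝓔) and ∑_{v∈M} c(v) ≤ d·∑_{v∈M*} c(v) for every hitting set M*; that is, the price of anarchy of the Mafia Hitting Set Game is at most d. -/
open Finset
open scoped Classical

namespace MafiaHS

variable {V : Type*} [Fintype V] [DecidableEq V]

noncomputable section

/-- The demand `D(v) = (1/(d-1)) ∑_{S ∋ v} ∑_{m ∈ (M∩S)∖{v}} r(m,S)` asked from agent `v`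
in the Mafia Hitting Set Game. -/
def demand (d : ℕ) (E : Finset (Finset V)) (M : Finset V)
    (r : V → Finset V → ℝ) (v : V) : ℝ :=
  (1 / ((d : ℝ) - 1)) * ∑ S ∈ E.filter (fun S => v ∈ S), ∑ m ∈ (M ∩ S).erase v, r m S

/-- A valid strategy profile of the Mafia Hitting Set Game: ransoms are nonnegative,
`r m S = 0` unless `m` is a mafioso belonging to the club `S ∈ 𝓔`, and every mafioso `m`
distributes exactly `c m` among the clubs containing him. -/
def ValidProfile (E : Finset (Finset V)) (c : V → ℝ)
    (M : Finset V) (r : V → Finset V → ℝ) : Prop :=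
  (∀ m S, 0 ≤ r m S) ∧
  (∀ m S, m ∉ M ∨ m ∉ S ∨ S ∉ E → r m S = 0) ∧
  (∀ m ∈ M, ∑ S ∈ E.filter (fun S => m ∈ S), r m S = c m)

/-- Utility of agent `v` in the Mafia Hitting Set Game.  A mafioso gets
`-c v + F⁺(v) - F⁻(v)` with `F⁻(v) = min(D v, c v)` and
`F⁺(v) = ∑_{S ∋ v} (r(v,S)/(d-1))·(|S∖(P∪{v})| + ∑_{u∈(S∩P)∖{v}} c u / D u)`,
where `P = {u ∈ M : D u > c u}` is the set of protected mafiosi.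
A civilian gets `-D v` minus the penalty `T` if he belongs to an uncovered club. -/
def utility (d : ℕ) (E : Finset (Finset V)) (c : V → ℝ) (T : ℝ)
    (M : Finset V) (r : V → Finset V → ℝ) (v : V) : ℝ :=
  if v ∈ M then
    -c v +
      (∑ S ∈ E.filter (fun S => v ∈ S),
        (r v S / ((d : ℝ) - 1)) *
          ((((S.filter fun u => ¬(u ∈ M ∧ c u < demand d E M r u)).erase v).card : ℝ) +
            ∑ u ∈ (S.filter fun u => u ∈ M ∧ c u < demand d E M r u).erase v,
              c u / demand d E M r u)) -
      min (demand d E M r v) (c v)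
  else
    -demand d E M r v - (if ∃ S ∈ E, v ∈ S ∧ M ∩ S = ∅ then T else 0)

/-- `(M', r')` is a unilateral deviation of agent `v` from `(M, r)`:
all other agents keep their strategies. -/
def Deviation (v : V) (M M' : Finset V) (r r' : V → Finset V → ℝ) : Prop :=
  (∀ u, u ≠ v → (u ∈ M' ↔ u ∈ M)) ∧ ∀ u S, u ≠ v → r' u S = r u S

/-- `(M, r)` is a pure Nash equilibrium of the Mafia Hitting Set Game: a valid profile such
that no agent can strictly increase his utility by a unilateral deviation. -/
def IsNashEq (d : ℕ) (E : Finset (Finset V)) (c : V → ℝ) (T : ℝ)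
    (M : Finset V) (r : V → Finset V → ℝ) : Prop :=
  ValidProfile E c M r ∧
  ∀ (v : V) (M' : Finset V) (r' : V → Finset V → ℝ),
    ValidProfile E c M' r' → Deviation v M M' r r' →
      utility d E c T M' r' v ≤ utility d E c T M r v

end

end MafiaHS

/-!
In an equilibrium every club contains a mafioso: a civilian in an uncovered club pays the penalty
`T > 2 ∑ c`, while joining the mafia costs him at most `2 c v`.

Comparing a mafioso `m` with the deviations "leave the mafia" and, if `m` is the only mafioso of
some club, "put the whole ransom on that club" gives `F⁺ m ≥ c m - (D m - c m)⁺`. Fines are paid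
out of demands, so `∑ F⁺ = ∑ D - ∑ (D - c)⁺ = ∑_M c - ∑ (D - c)⁺` and all these inequalities are
equalities. A mafioso paying ransom to a club with a protected member collects less than his cost,
so he is protected himself. Hence protected mafiosi are charged only by protected mafiosi, their
total demand is at most their total cost, and nobody is protected.

The clubs of a mafioso `u` then carry total ransom `c u + (d - 1) D u ≤ d c u`. So do the clubs of
a civilian `v`: otherwise `v` joins the mafia and spreads `c v` over his clubs in proportion to
their ransom; every other member still pays at least the fraction `(d - 1) / d` of his demands, and
`v` gains. Charging the ransom of each club to a member of a hitting set `M*` gives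
`∑_M c ≤ d ∑_{M*} c`.
-/

namespace MafiaHS

lemma sum_sum_erase {α R : Type*} [DecidableEq α] [CommRing R] (s : Finset α) (f : α → R) :
    ∑ x ∈ s, ∑ y ∈ s.erase x, f y = ((#s : R) - 1) * ∑ y ∈ s, f y := by
  calc ∑ x ∈ s, ∑ y ∈ s.erase x, f y = ∑ x ∈ s, (∑ y ∈ s, f y - f x) :=
        sum_congr rfl fun x hx => sum_erase_eq_sub hx
    _ = ((#s : R) - 1) * ∑ y ∈ s, f y := by
        rw [sum_sub_distrib, sum_const, nsmul_eq_mul]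
        ring

lemma sum_sum_erase_comm {α R : Type*} [DecidableEq α] [AddCommGroup R] (s : Finset α)
    (f : α → α → R) :
    ∑ x ∈ s, ∑ y ∈ s.erase x, f x y = ∑ y ∈ s, ∑ x ∈ s.erase y, f x y :=
  sum_comm' fun x y => by simp only [mem_erase]; tauto

noncomputable section

section

variable {V : Type*} [DecidableEq V]

def IsRansomVector (E : Finset (Finset V)) (c : V → ℝ) (v : V) (ρ : Finset V → ℝ) : Prop :=
  (∀ S, 0 ≤ ρ S) ∧ (∀ S, v ∉ S ∨ S ∉ E → ρ S = 0) ∧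
    ∑ S ∈ E.filter (fun S => v ∈ S), ρ S = c v

def IsHittingSet (E : Finset (Finset V)) (H : Finset V) : Prop :=
  ∀ S ∈ E, (H ∩ S).Nonempty

/-- A protected mafioso pays only the fraction `c u / D u` of the demands on him, everybody else
pays them in full; the bracket in `utility` is `∑ u ∈ S.erase v, paidFraction … u`. -/
def paidFraction (d : ℕ) (E : Finset (Finset V)) (c : V → ℝ) (M : Finset V)
    (r : V → Finset V → ℝ) (u : V) : ℝ :=
  if u ∈ M ∧ c u < demand d E M r u then c u / demand d E M r u else 1

def fineIncome (d : ℕ) (E : Finset (Finset V)) (c : V → ℝ) (M : Finset V)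
    (r : V → Finset V → ℝ) (v : V) : ℝ :=
  ∑ S ∈ E.filter (fun S => v ∈ S),
    r v S / ((d : ℝ) - 1) * ∑ u ∈ S.erase v, paidFraction d E c M r u

def protectedMafiosi (d : ℕ) (E : Finset (Finset V)) (c : V → ℝ) (M : Finset V)
    (r : V → Finset V → ℝ) : Finset V :=
  M.filter fun u => c u < demand d E M r u

def clubRansom (r : V → Finset V → ℝ) (S : Finset V) : ℝ :=
  ∑ m ∈ S, r m S

def clubLoad (E : Finset (Finset V)) (r : V → Finset V → ℝ) (u : V) : ℝ :=
  ∑ S ∈ E.filter (fun S => u ∈ S), clubRansom r S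

variable {d : ℕ} {E : Finset (Finset V)} {c : V → ℝ} {M : Finset V}
  {r : V → Finset V → ℝ} {T : ℝ}

lemma cast_sub_one_pos (hd : 2 ≤ d) : (0 : ℝ) < d - 1 := by
  have : (2 : ℝ) ≤ d := by exact_mod_cast hd
  linarith

lemma card_erase_of_mem_club (hunif : ∀ S ∈ E, #S = d) {S : Finset V} (hS : S ∈ E) {v : V}
    (hv : v ∈ S) : (#(S.erase v) : ℝ) = d - 1 := by
  rw [card_erase_of_mem hv, hunif S hS, Nat.cast_sub (hunif S hS ▸ card_pos.mpr ⟨v, hv⟩),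
    Nat.cast_one]

lemma demand_nonneg (hd : 2 ≤ d) (hr : ∀ m S, 0 ≤ r m S) (v : V) : 0 ≤ demand d E M r v :=
  mul_nonneg (one_div_nonneg.mpr (cast_sub_one_pos hd).le)
    (sum_nonneg fun S _ => sum_nonneg fun m _ => hr m S)

lemma ValidProfile.sum_ransom (hval : ValidProfile E c M r) (u : V) :
    ∑ S ∈ E.filter (fun S => u ∈ S), r u S = if u ∈ M then c u else 0 := by
  split_ifs with hu
  · exact hval.2.2 u hu
  · exact sum_eq_zero fun S _ => hval.2.1 u S (Or.inl hu)

lemma ValidProfile.sum_inter_eq (hval : ValidProfile E c M r) (S A : Finset V) :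
    ∑ m ∈ M ∩ A, r m S = ∑ m ∈ A, r m S :=
  sum_subset inter_subset_right fun m hmA hm =>
    hval.2.1 m S (Or.inl fun hmM => hm (mem_inter.mpr ⟨hmM, hmA⟩))

lemma ValidProfile.demand_eq (hval : ValidProfile E c M r) (u : V) :
    demand d E M r u
      = 1 / ((d : ℝ) - 1)
        * ∑ S ∈ E.filter (fun S => u ∈ S), ∑ m ∈ S.erase u, r m S := by
  simp only [demand, ← inter_erase, hval.sum_inter_eq]

lemma ValidProfile.sub_one_mul_demand (hd : 2 ≤ d) (hval : ValidProfile E c M r) (u : V) :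
    ((d : ℝ) - 1) * demand d E M r u
      = ∑ S ∈ E.filter (fun S => u ∈ S), ∑ m ∈ S.erase u, r m S := by
  rw [hval.demand_eq, ← mul_assoc, mul_one_div_cancel (cast_sub_one_pos hd).ne', one_mul]

lemma ValidProfile.clubLoad_eq (hd : 2 ≤ d) (hval : ValidProfile E c M r) (u : V) :
    clubLoad E r u = (if u ∈ M then c u else 0) + ((d : ℝ) - 1) * demand d E M r u := by
  rw [hval.sub_one_mul_demand hd, ← hval.sum_ransom, ← sum_add_distrib]
  exact sum_congr rfl fun S hS => (add_sum_erase _ _ (mem_filter.mp hS).2).symm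

lemma ValidProfile.clubLoad_le_of_mem (hd : 2 ≤ d) (hval : ValidProfile E c M r) {u : V}
    (hu : u ∈ M) (hdem : demand d E M r u ≤ c u) : clubLoad E r u ≤ d * c u := by
  rw [hval.clubLoad_eq hd, if_pos hu]
  nlinarith [cast_sub_one_pos hd]

lemma sum_clubRansom_le_sum_clubLoad {H : Finset V} (hH : IsHittingSet E H)
    (hr : ∀ m S, 0 ≤ r m S) : ∑ S ∈ E, clubRansom r S ≤ ∑ w ∈ H, clubLoad E r w := by
  calc ∑ S ∈ E, clubRansom r S ≤ ∑ S ∈ E, ∑ w ∈ H ∩ S, clubRansom r S :=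
        sum_le_sum fun S hS => by
          rw [sum_const, nsmul_eq_mul]
          exact le_mul_of_one_le_left (sum_nonneg fun m _ => hr m S)
            (by exact_mod_cast card_pos.mpr (hH S hS))
    _ = ∑ w ∈ H, clubLoad E r w :=
        (sum_comm' fun w S => by simp only [mem_filter, mem_inter]; tauto).symm

lemma utility_of_mem {v : V} (hv : v ∈ M) :
    utility d E c T M r v = -c v + fineIncome d E c M r v - min (demand d E M r v) (c v) := by
  simp only [utility, if_pos hv, fineIncome, paidFraction, sum_ite, ← filter_erase,
    sum_const, nsmul_eq_mul, mul_one, add_comm]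

lemma utility_of_notMem {v : V} (hv : v ∉ M) :
    utility d E c T M r v
      = -demand d E M r v - if ∃ S ∈ E, v ∈ S ∧ M ∩ S = ∅ then T else 0 :=
  if_neg hv

lemma utility_of_notMem_of_isHittingSet {v : V} (hv : v ∉ M) (hH : IsHittingSet E M) :
    utility d E c T M r v = -demand d E M r v := by
  rw [utility_of_notMem hv, if_neg, sub_zero]
  rintro ⟨S, hS, -, hempty⟩
  exact (hH S hS).ne_empty hempty

lemma paidFraction_of_notMem {u : V} (hu : u ∉ M) : paidFraction d E c M r u = 1 :=
  if_neg fun h => hu h.1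

lemma paidFraction_nonneg (hd : 2 ≤ d) (hc : ∀ v, 0 ≤ c v) (hr : ∀ m S, 0 ≤ r m S)
    (u : V) :
    0 ≤ paidFraction d E c M r u := by
  unfold paidFraction
  split_ifs
  · exact div_nonneg (hc u) (demand_nonneg hd hr u)
  · exact zero_le_one

lemma paidFraction_le_one (hc : ∀ v, 0 ≤ c v) (u : V) : paidFraction d E c M r u ≤ 1 := by
  unfold paidFraction
  split_ifs with h
  · exact div_le_one_of_le₀ h.2.le ((hc u).trans h.2.le)
  · exact le_rfl

lemma paidFraction_lt_one (hc : ∀ v, 0 ≤ c v) {u : V} (hu : u ∈ M)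
    (hcu : c u < demand d E M r u) : paidFraction d E c M r u < 1 := by
  rw [paidFraction, if_pos ⟨hu, hcu⟩]
  exact (div_lt_one ((hc u).trans_lt hcu)).mpr hcu

lemma le_paidFraction (hc : ∀ v, 0 ≤ c v) {u : V} {k : ℝ} (hk : k ≤ 1)
    (h : u ∈ M → k * demand d E M r u ≤ c u) : k ≤ paidFraction d E c M r u := by
  unfold paidFraction
  split_ifs with hu
  · exact (le_div_iff₀ ((hc u).trans_lt hu.2)).mpr (h hu.1)
  · exact hk

lemma paidFraction_mul_demand (hc : ∀ v, 0 ≤ c v) (u : V) :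
    paidFraction d E c M r u * demand d E M r u
      = if u ∈ M then min (demand d E M r u) (c u) else demand d E M r u := by
  unfold paidFraction
  split_ifs with h hu hu
  · rw [div_mul_cancel₀ _ ((hc u).trans_lt h.2).ne', min_eq_right h.2.le]
  · exact absurd h.1 hu
  · rw [one_mul, min_eq_left (not_lt.mp fun h' => h ⟨hu, h'⟩)]
  · rw [one_mul]

lemma sum_paidFraction_erase_le (hunif : ∀ S ∈ E, #S = d) (hc : ∀ v, 0 ≤ c v)
    {S : Finset V} (hS : S ∈ E) {v : V} (hv : v ∈ S) :
    ∑ u ∈ S.erase v, paidFraction d E c M r u ≤ (d : ℝ) - 1 := by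
  rw [← card_erase_of_mem_club hunif hS hv, ← mul_one (#(S.erase v) : ℝ), ← nsmul_eq_mul]
  exact sum_le_card_nsmul _ _ _ fun u _ => paidFraction_le_one hc u

lemma sum_paidFraction_erase_lt (hunif : ∀ S ∈ E, #S = d) (hc : ∀ v, 0 ≤ c v)
    {S : Finset V} (hS : S ∈ E) {v u : V} (hv : v ∈ S) (hu : u ∈ S.erase v)
    (hlt : paidFraction d E c M r u < 1) :
    ∑ u ∈ S.erase v, paidFraction d E c M r u < (d : ℝ) - 1 := by
  rw [← card_erase_of_mem_club hunif hS hv, card_eq_sum_ones, Nat.cast_sum, Nat.cast_one]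
  exact sum_lt_sum (fun u _ => paidFraction_le_one hc u) ⟨u, hu, hlt⟩

lemma fineIncome_nonneg (hd : 2 ≤ d) (hc : ∀ v, 0 ≤ c v) (hr : ∀ m S, 0 ≤ r m S) (v : V) :
    0 ≤ fineIncome d E c M r v :=
  sum_nonneg fun S _ => mul_nonneg (div_nonneg (hr v S) (cast_sub_one_pos hd).le)
    (sum_nonneg fun u _ => paidFraction_nonneg hd hc hr u)

lemma le_fineIncome (hd : 2 ≤ d) (hunif : ∀ S ∈ E, #S = d) (hval : ValidProfile E c M r)
    {v : V} (hv : v ∈ M) {k : ℝ}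
    (hk : ∀ S ∈ E, v ∈ S → 0 < r v S →
      ∀ u ∈ S.erase v, k ≤ paidFraction d E c M r u) :
    k * c v ≤ fineIncome d E c M r v := by
  rw [← hval.2.2 v hv, mul_sum]
  refine sum_le_sum fun S hS => ?_
  obtain ⟨hSE, hvS⟩ := mem_filter.mp hS
  rcases (hval.1 v S).eq_or_lt with h0 | hpos
  · simp [← h0]
  have hsum : ((d : ℝ) - 1) * k ≤ ∑ u ∈ S.erase v, paidFraction d E c M r u := by
    rw [← card_erase_of_mem_club hunif hSE hvS, ← nsmul_eq_mul, ← sum_const]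
    exact sum_le_sum (hk S hSE hvS hpos)
  calc k * r v S = r v S / ((d : ℝ) - 1) * (((d : ℝ) - 1) * k) := by
        field_simp [(cast_sub_one_pos hd).ne']
    _ ≤ _ := mul_le_mul_of_nonneg_left hsum (div_nonneg hpos.le (cast_sub_one_pos hd).le)

lemma fineIncome_lt_cost (hd : 2 ≤ d) (hunif : ∀ S ∈ E, #S = d) (hc : ∀ v, 0 ≤ c v)
    (hval : ValidProfile E c M r) {m u : V} {S : Finset V} (hm : m ∈ M) (hS : S ∈ E)
    (hmS : m ∈ S) (hpos : 0 < r m S) (hu : u ∈ S.erase m)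
    (hlt : paidFraction d E c M r u < 1) :
    fineIncome d E c M r m < c m := by
  have ha := cast_sub_one_pos hd
  rw [← hval.2.2 m hm]
  refine sum_lt_sum (fun S' hS' => ?_) ⟨S, mem_filter.mpr ⟨hS, hmS⟩, ?_⟩
  · rw [div_mul_eq_mul_div, div_le_iff₀ ha]
    exact mul_le_mul_of_nonneg_left
      (sum_paidFraction_erase_le hunif hc (mem_filter.mp hS').1 (mem_filter.mp hS').2) (hval.1 m S')
  · rw [div_mul_eq_mul_div, div_lt_iff₀ ha]
    exact mul_lt_mul_of_pos_left (sum_paidFraction_erase_lt hunif hc hS hmS hu hlt) hpos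

lemma ValidProfile.sub_one_mul_demand_update_le (hd : 2 ≤ d) (hval : ValidProfile E c M r)
    {M' : Finset V} {v : V} {ρ : Finset V → ℝ}
    (hval' : ValidProfile E c M' (Function.update r v ρ)) (u : V) :
    ((d : ℝ) - 1) * demand d E M' (Function.update r v ρ) u
      ≤ ((d : ℝ) - 1) * demand d E M r u + ∑ S ∈ E.filter (fun S => u ∈ S), ρ S := by
  rw [hval'.sub_one_mul_demand hd, hval.sub_one_mul_demand hd, ← sum_add_distrib]
  refine sum_le_sum fun S _ => ?_
  have hρ : 0 ≤ ρ S := by simpa using hval'.1 v S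
  calc ∑ m ∈ S.erase u, Function.update r v ρ m S
      ≤ ∑ m ∈ S.erase u, (r m S + (Pi.single v (ρ S) : V → ℝ) m) :=
        sum_le_sum fun m _ => by
          rcases eq_or_ne m v with rfl | hmv
          · simpa using hval.1 m S
          · simp [hmv]
    _ ≤ ∑ m ∈ S.erase u, r m S + ρ S := by
        rw [sum_add_distrib, sum_pi_single']
        split_ifs <;> linarith

lemma ValidProfile.sub_one_div_le_paidFraction_update (hd : 2 ≤ d) (hc : ∀ v, 0 ≤ c v)
    (hval : ValidProfile E c M r) (hdem : ∀ u ∈ M, demand d E M r u ≤ c u) {v : V}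
    {ρ : Finset V → ℝ} (hval' : ValidProfile E c (insert v M) (Function.update r v ρ))
    (hρ : ∀ u ∈ M, ∑ S ∈ E.filter (fun S => u ∈ S), ρ S ≤ c u) {u : V}
    (huv : u ≠ v) :
    ((d : ℝ) - 1) / d ≤ paidFraction d E c (insert v M) (Function.update r v ρ) u := by
  have ha := cast_sub_one_pos hd
  refine le_paidFraction hc (div_le_one_of_le₀ (by linarith) (by positivity)) fun hu => ?_
  have huM : u ∈ M := (mem_insert.mp hu).resolve_left huv
  rw [div_mul_eq_mul_div, div_le_iff₀ (by linarith)]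
  linarith [hval.sub_one_mul_demand_update_le hd hval' u, hρ u huM,
    mul_le_mul_of_nonneg_left (hdem u huM) ha.le]

lemma isRansomVector_single (hc : ∀ v, 0 ≤ c v) {S₀ : Finset V} (hS₀ : S₀ ∈ E) {v : V}
    (hv : v ∈ S₀) : IsRansomVector E c v (Pi.single S₀ (c v)) := by
  refine ⟨fun S => ?_, fun S h => ?_, ?_⟩
  · rcases eq_or_ne S S₀ with rfl | hS
    · simpa using hc v
    · simp [hS]
  · have hS : S ≠ S₀ := by rintro rfl; tauto
    simp [hS]
  · rw [sum_pi_single', if_pos (mem_filter.mpr ⟨hS₀, hv⟩)]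

lemma deviation_insert_update (v : V) (M : Finset V) (r : V → Finset V → ℝ)
    (ρ : Finset V → ℝ) : Deviation v M (insert v M) r (Function.update r v ρ) :=
  ⟨fun u hu => by simp [hu], fun u S hu => by simp [hu]⟩

lemma deviation_erase_update (v : V) (M : Finset V) (r : V → Finset V → ℝ) :
    Deviation v M (M.erase v) r (Function.update r v 0) :=
  ⟨fun u hu => by simp [hu], fun u S hu => by simp [hu]⟩

lemma ValidProfile.insert_update (hval : ValidProfile E c M r) {v : V} {ρ : Finset V → ℝ}
    (hρ : IsRansomVector E c v ρ) : ValidProfile E c (insert v M) (Function.update r v ρ) := by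
  refine ⟨fun m S => ?_, fun m S h => ?_, fun m hm => ?_⟩ <;> rcases eq_or_ne m v with rfl | hmv
  · simpa using hρ.1 S
  · simpa [hmv] using hval.1 m S
  · simpa using hρ.2.1 S (by simpa using h)
  · simpa [hmv] using hval.2.1 m S (by simpa [hmv] using h)
  · simpa using hρ.2.2
  · simpa [hmv] using hval.2.2 m (by simpa [hmv] using hm)

lemma ValidProfile.erase_update (hval : ValidProfile E c M r) (v : V) :
    ValidProfile E c (M.erase v) (Function.update r v 0) := by
  refine ⟨fun m S => ?_, fun m S h => ?_, fun m hm => ?_⟩ <;> rcases eq_or_ne m v with rfl | hmv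
  · simp
  · simpa [hmv] using hval.1 m S
  · simp
  · simpa [hmv] using hval.2.1 m S (by simpa [hmv] using h)
  · simp at hm
  · simpa [hmv] using hval.2.2 m (by simpa [hmv] using hm)

lemma demand_eq_of_deviation {v : V} {M' : Finset V} {r' : V → Finset V → ℝ}
    (h : Deviation v M M' r r') : demand d E M' r' v = demand d E M r v := by
  unfold demand
  congr 1
  refine sum_congr rfl fun S _ => ?_
  have hM : (M' ∩ S).erase v = (M ∩ S).erase v := by
    ext u
    by_cases hu : u = v <;> simp [hu, h.1 u]
  rw [hM]
  exact sum_congr rfl fun m hm => h.2 m S (ne_of_mem_erase hm)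

lemma IsNashEq.utility_insert_le (h : IsNashEq d E c T M r) {v : V} {ρ : Finset V → ℝ}
    (hρ : IsRansomVector E c v ρ) :
    -c v + fineIncome d E c (insert v M) (Function.update r v ρ) v
        - min (demand d E M r v) (c v) ≤ utility d E c T M r v := by
  have hdev := deviation_insert_update v M r ρ
  have := h.2 v _ _ (h.1.insert_update hρ) hdev
  rwa [utility_of_mem (mem_insert_self v M), demand_eq_of_deviation hdev] at this

lemma IsNashEq.utility_erase_le (h : IsNashEq d E c T M r) {v : V}
    (hH : IsHittingSet E (M.erase v)) :
    -demand d E M r v ≤ utility d E c T M r v := by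
  have hdev := deviation_erase_update v M r
  have := h.2 v _ _ (h.1.erase_update v) hdev
  rwa [utility_of_notMem_of_isHittingSet (notMem_erase v M) hH, demand_eq_of_deviation hdev]
    at this

theorem IsNashEq.cost_add_min_sub_demand_le_fineIncome (hd : 2 ≤ d) (hunif : ∀ S ∈ E, #S = d)
    (hc : ∀ v, 0 ≤ c v) (h : IsNashEq d E c T M r) (hH : IsHittingSet E M) {m : V}
    (hm : m ∈ M) :
    c m + min (demand d E M r m) (c m) - demand d E M r m ≤ fineIncome d E c M r m := by
  have hstay : utility d E c T M r m = _ := utility_of_mem hm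
  by_cases hH' : IsHittingSet E (M.erase m)
  · linarith [h.utility_erase_le hH']
  obtain ⟨S₀, hS₀, hempty⟩ : ∃ S₀ ∈ E, ¬((M.erase m) ∩ S₀).Nonempty := by
    simpa [IsHittingSet] using hH'
  have hlone : ∀ u ∈ S₀, u ∈ M → u = m := fun u hu huM => by
    by_contra hum
    exact hempty ⟨u, mem_inter.mpr ⟨mem_erase.mpr ⟨hum, huM⟩, hu⟩⟩
  have hmS₀ : m ∈ S₀ := by
    obtain ⟨u, hu⟩ := hH S₀ hS₀
    simpa [← hlone u (mem_inter.mp hu).2 (mem_inter.mp hu).1] using (mem_inter.mp hu).2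
  have hρ := isRansomVector_single hc hS₀ hmS₀
  have hF : 1 * c m
      ≤ fineIncome d E c (insert m M) (Function.update r m (Pi.single S₀ (c m))) m := by
    refine le_fineIncome hd hunif (h.1.insert_update hρ) (mem_insert_self m M)
      fun S _ _ hpos u hu => ?_
    obtain rfl : S = S₀ := by
      by_contra hS
      simp [hS] at hpos
    refine (paidFraction_of_notMem fun huM => ?_).ge
    rcases mem_insert.mp huM with rfl | huM
    · exact ne_of_mem_erase hu rfl
    · exact ne_of_mem_erase hu (hlone u (mem_of_mem_erase hu) huM)
  linarith [h.utility_insert_le hρ, min_le_left (demand d E M r m) (c m)]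

end

variable {V : Type*} [Fintype V] [DecidableEq V]

section

variable {d : ℕ} {E : Finset (Finset V)} {c : V → ℝ} {M : Finset V}
  {r : V → Finset V → ℝ} {T : ℝ}

lemma sum_sum_filter_mem (f : V → Finset V → ℝ) :
    ∑ u, ∑ S ∈ E.filter (fun S => u ∈ S), f u S = ∑ S ∈ E, ∑ u ∈ S, f u S :=
  sum_comm' (by simp [and_comm])

lemma ValidProfile.sum_cost_eq (hval : ValidProfile E c M r) :
    ∑ m ∈ M, c m = ∑ S ∈ E, clubRansom r S := by
  calc ∑ m ∈ M, c m = ∑ u, ∑ S ∈ E.filter (fun S => u ∈ S), r u S := by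
        simp only [hval.sum_ransom, sum_ite_mem, univ_inter]
    _ = ∑ S ∈ E, clubRansom r S := sum_sum_filter_mem fun m S => r m S

lemma ValidProfile.sum_demand (hd : 2 ≤ d) (hunif : ∀ S ∈ E, #S = d)
    (hval : ValidProfile E c M r) :
    ∑ u, demand d E M r u = ∑ m ∈ M, c m := by
  have key : ((d : ℝ) - 1) * ∑ u, demand d E M r u = ((d : ℝ) - 1) * ∑ m ∈ M, c m := by
    rw [mul_sum, hval.sum_cost_eq, mul_sum]
    simp only [hval.sub_one_mul_demand hd]
    rw [sum_sum_filter_mem (fun u S => ∑ m ∈ S.erase u, r m S)]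
    refine sum_congr rfl fun S hS => ?_
    rw [sum_sum_erase, hunif S hS]
    rfl
  exact mul_left_cancel₀ (cast_sub_one_pos hd).ne' key

lemma ValidProfile.sum_fineIncome (hval : ValidProfile E c M r) :
    ∑ m ∈ M, fineIncome d E c M r m = ∑ u, paidFraction d E c M r u * demand d E M r u := by
  rw [sum_subset (f := fineIncome d E c M r) (subset_univ M) fun m _ hm =>
    sum_eq_zero fun S _ => by rw [hval.2.1 m S (Or.inl hm), zero_div, zero_mul]]
  simp only [fineIncome, hval.demand_eq, mul_sum]
  rw [sum_sum_filter_mem, sum_sum_filter_mem]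
  refine sum_congr rfl fun S _ => ?_
  rw [sum_sum_erase_comm]
  exact sum_congr rfl fun u _ => sum_congr rfl fun m _ => by ring

theorem IsNashEq.isHittingSet (hd : 2 ≤ d) (hunif : ∀ S ∈ E, #S = d) (hc : ∀ v, 0 ≤ c v)
    (hT : 2 * ∑ v, c v < T) (h : IsNashEq d E c T M r) : IsHittingSet E M := by
  intro S₀ hS₀
  by_contra hne
  rw [not_nonempty_iff_eq_empty] at hne
  obtain ⟨v, hv⟩ : S₀.Nonempty := card_pos.mp (by rw [hunif S₀ hS₀]; omega)
  have hvM : v ∉ M := fun hvM =>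
    eq_empty_iff_forall_notMem.mp hne v (mem_inter.mpr ⟨hvM, hv⟩)
  have hρ := isRansomVector_single hc hS₀ hv
  have hjoin := h.utility_insert_le hρ
  rw [utility_of_notMem hvM, if_pos ⟨S₀, hS₀, hv, hne⟩] at hjoin
  linarith [fineIncome_nonneg (E := E) (M := insert v M) hd hc (h.1.insert_update hρ).1 v,
    min_le_right (demand d E M r v) (c v), demand_nonneg (E := E) (M := M) hd h.1.1 v,
    single_le_sum (fun u _ => hc u) (mem_univ v)]

theorem IsNashEq.fineIncome_eq (hd : 2 ≤ d) (hunif : ∀ S ∈ E, #S = d) (hc : ∀ v, 0 ≤ c v)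
    (h : IsNashEq d E c T M r) (hH : IsHittingSet E M) {m : V} (hm : m ∈ M) :
    fineIncome d E c M r m = c m + min (demand d E M r m) (c m) - demand d E M r m := by
  have hsum : ∑ m ∈ M, (c m + min (demand d E M r m) (c m) - demand d E M r m)
      = ∑ m ∈ M, fineIncome d E c M r m := by
    calc ∑ m ∈ M, (c m + min (demand d E M r m) (c m) - demand d E M r m)
        = ∑ u, demand d E M r u
            + ∑ m ∈ M, (min (demand d E M r m) (c m) - demand d E M r m) := by
          rw [h.1.sum_demand hd hunif, ← sum_add_distrib]
          exact sum_congr rfl fun m _ => by ring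
      _ = ∑ u, (demand d E M r u
            + if u ∈ M then min (demand d E M r u) (c u) - demand d E M r u else 0) := by
          rw [sum_add_distrib, sum_ite_mem, univ_inter]
      _ = ∑ u, paidFraction d E c M r u * demand d E M r u :=
          sum_congr rfl fun u _ => by rw [paidFraction_mul_demand hc]; split_ifs <;> ring
      _ = ∑ m ∈ M, fineIncome d E c M r m := h.1.sum_fineIncome.symm
  exact ((sum_eq_sum_iff_of_le fun m hm =>
    h.cost_add_min_sub_demand_le_fineIncome hd hunif hc hH hm).mp hsum m hm).symm

lemma IsNashEq.ransom_eq_zero_of_protected (hd : 2 ≤ d) (hunif : ∀ S ∈ E, #S = d)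
    (hc : ∀ v, 0 ≤ c v) (h : IsNashEq d E c T M r) (hH : IsHittingSet E M) {S : Finset V}
    {u m : V} (hS : S ∈ E) (huS : u ∈ S) (hu : u ∈ protectedMafiosi d E c M r)
    (hm : m ∈ S.erase u) (hmP : m ∉ protectedMafiosi d E c M r) : r m S = 0 := by
  by_contra hne
  have hmM : m ∈ M := by
    by_contra hmM
    exact hne (h.1.2.1 m S (Or.inl hmM))
  obtain ⟨huM, hcu⟩ := mem_filter.mp hu
  have hlt := fineIncome_lt_cost hd hunif hc h.1 hmM hS (mem_of_mem_erase hm)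
    ((h.1.1 m S).lt_of_ne' hne) (mem_erase.mpr ⟨(ne_of_mem_erase hm).symm, huS⟩)
    (paidFraction_lt_one hc huM hcu)
  rw [h.fineIncome_eq hd hunif hc hH hmM] at hlt
  exact hmP (mem_filter.mpr ⟨hmM, (min_lt_iff.mp (by linarith)).resolve_left (lt_irrefl _)⟩)

lemma IsNashEq.sum_demand_protectedMafiosi_le (hd : 2 ≤ d) (hunif : ∀ S ∈ E, #S = d)
    (hc : ∀ v, 0 ≤ c v) (h : IsNashEq d E c T M r) (hH : IsHittingSet E M) :
    ∑ u ∈ protectedMafiosi d E c M r, demand d E M r u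
      ≤ ∑ u ∈ protectedMafiosi d E c M r, c u := by
  set P := protectedMafiosi d E c M r
  have ha := cast_sub_one_pos hd
  have hclub : ∀ S ∈ E, ∑ u ∈ S with u ∈ P, ∑ m ∈ S.erase u, r m S
      ≤ ((d : ℝ) - 1) * ∑ m ∈ S with m ∈ P, r m S := fun S hS => by
    calc ∑ u ∈ S with u ∈ P, ∑ m ∈ S.erase u, r m S
        = ∑ u ∈ S with u ∈ P, ∑ m ∈ (S.filter (· ∈ P)).erase u, r m S :=
          sum_congr rfl fun u hu => by
            obtain ⟨huS, huP⟩ := mem_filter.mp hu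
            refine (sum_subset (erase_subset_erase u (filter_subset _ S)) fun m hm hmP => ?_).symm
            refine h.ransom_eq_zero_of_protected hd hunif hc hH hS huS huP hm fun hmP' => hmP ?_
            exact mem_erase.mpr
              ⟨ne_of_mem_erase hm, mem_filter.mpr ⟨mem_of_mem_erase hm, hmP'⟩⟩
      _ = ((#(S.filter (· ∈ P)) : ℝ) - 1) * ∑ m ∈ S with m ∈ P, r m S :=
          sum_sum_erase _ _
      _ ≤ ((d : ℝ) - 1) * ∑ m ∈ S with m ∈ P, r m S := by
          refine mul_le_mul_of_nonneg_right ?_ (sum_nonneg fun m _ => h.1.1 m S)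
          have : #(S.filter (· ∈ P)) ≤ d := hunif S hS ▸ card_filter_le S _
          have : (#(S.filter (· ∈ P)) : ℝ) ≤ d := by exact_mod_cast this
          linarith
  refine le_of_mul_le_mul_left ?_ ha
  calc ((d : ℝ) - 1) * ∑ u ∈ P, demand d E M r u
      = ∑ u ∈ P, ∑ S ∈ E.filter (fun S => u ∈ S), ∑ m ∈ S.erase u, r m S := by
        rw [mul_sum]
        exact sum_congr rfl fun u _ => h.1.sub_one_mul_demand hd u
    _ = ∑ S ∈ E, ∑ u ∈ S with u ∈ P, ∑ m ∈ S.erase u, r m S :=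
        sum_comm' fun u S => by simp only [mem_filter]; tauto
    _ ≤ ∑ S ∈ E, ((d : ℝ) - 1) * ∑ m ∈ S with m ∈ P, r m S := sum_le_sum hclub
    _ = ((d : ℝ) - 1) * ∑ m ∈ P, ∑ S ∈ E.filter (fun S => m ∈ S), r m S := by
        rw [← mul_sum]
        exact congrArg _ (sum_comm' fun S m => by simp only [mem_filter]; tauto)
    _ = ((d : ℝ) - 1) * ∑ u ∈ P, c u :=
        congrArg _ (sum_congr rfl fun m hm => h.1.2.2 m (mem_filter.mp hm).1)

theorem IsNashEq.demand_le_cost (hd : 2 ≤ d) (hunif : ∀ S ∈ E, #S = d) (hc : ∀ v, 0 ≤ c v)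
    (h : IsNashEq d E c T M r) (hH : IsHittingSet E M) {u : V} (hu : u ∈ M) :
    demand d E M r u ≤ c u := by
  by_contra hcu
  have huP : u ∈ protectedMafiosi d E c M r := mem_filter.mpr ⟨hu, not_le.mp hcu⟩
  exact (h.sum_demand_protectedMafiosi_le hd hunif hc hH).not_gt
    (sum_lt_sum_of_nonempty ⟨u, huP⟩ fun v hv => (mem_filter.mp hv).2)

theorem IsNashEq.clubLoad_le_of_notMem (hd : 2 ≤ d) (hunif : ∀ S ∈ E, #S = d)
    (hc : ∀ v, 0 ≤ c v) (h : IsNashEq d E c T M r) (hH : IsHittingSet E M) {v : V}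
    (hv : v ∉ M) : clubLoad E r v ≤ d * c v := by
  set L := clubLoad E r v
  have ha := cast_sub_one_pos hd
  have hdem := fun u (hu : u ∈ M) => h.demand_le_cost hd hunif hc hH hu
  by_contra! hlt
  have hL : 0 < L := (mul_nonneg (Nat.cast_nonneg d) (hc v)).trans_lt hlt
  -- `v` joins the mafia, spreading `c v` over his clubs in proportion to their ransom.
  set ρ : Finset V → ℝ := fun S => if S ∈ E ∧ v ∈ S then c v / L * clubRansom r S else 0
  have hρ0 : ∀ S, 0 ≤ c v / L * clubRansom r S := fun S =>
    mul_nonneg (div_nonneg (hc v) hL.le) (sum_nonneg fun m _ => h.1.1 m S)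
  have hρ : IsRansomVector E c v ρ := by
    refine ⟨fun S => ?_, fun S hS => if_neg (by tauto), ?_⟩
    · simp only [ρ]
      split_ifs
      exacts [hρ0 S, le_rfl]
    · rw [sum_congr rfl fun S hS => if_pos (mem_filter.mp hS), ← mul_sum]
      exact div_mul_cancel₀ _ hL.ne'
  have hextra : ∀ u ∈ M, ∑ S ∈ E.filter (fun S => u ∈ S), ρ S ≤ c u := fun u hu =>
    calc ∑ S ∈ E.filter (fun S => u ∈ S), ρ S ≤ c v / L * clubLoad E r u := by
          rw [clubLoad, mul_sum]
          refine sum_le_sum fun S _ => ?_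
          simp only [ρ]
          split_ifs
          exacts [le_rfl, hρ0 S]
      _ ≤ c v / L * (d * c u) := mul_le_mul_of_nonneg_left
          (h.1.clubLoad_le_of_mem hd hu (hdem u hu)) (div_nonneg (hc v) hL.le)
      _ ≤ c u := by
          rw [div_mul_eq_mul_div, div_le_iff₀ hL]
          nlinarith [hc u]
  have hval' := h.1.insert_update hρ
  have hF := le_fineIncome hd hunif hval' (mem_insert_self v M) fun S _ _ _ u hu =>
    h.1.sub_one_div_le_paidFraction_update hd hc hdem hval' hextra (ne_of_mem_erase hu)
  have hjoin := h.utility_insert_le hρ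
  rw [utility_of_notMem_of_isHittingSet hv hH] at hjoin
  have hD : L = ((d : ℝ) - 1) * demand d E M r v := by
    simpa [hv] using h.1.clubLoad_eq hd v
  have hd0 : (0 : ℝ) < d := by linarith
  rw [div_mul_eq_mul_div, div_le_iff₀ hd0] at hF
  have hle : d * demand d E M r v ≤ (d + 1) * c v := by
    nlinarith [min_le_right (demand d E M r v) (c v)]
  nlinarith [mul_le_mul_of_nonneg_left hle ha.le, mul_lt_mul_of_pos_left hlt hd0, hc v]

theorem IsNashEq.clubLoad_le (hd : 2 ≤ d) (hunif : ∀ S ∈ E, #S = d) (hc : ∀ v, 0 ≤ c v)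
    (hT : 2 * ∑ v, c v < T) (h : IsNashEq d E c T M r) (w : V) : clubLoad E r w ≤ d * c w := by
  have hH := h.isHittingSet hd hunif hc hT
  by_cases hw : w ∈ M
  · exact h.1.clubLoad_le_of_mem hd hw (h.demand_le_cost hd hunif hc hH hw)
  · exact h.clubLoad_le_of_notMem hd hunif hc hH hw

end

/-- in any pure Nash equilibrium `(M, r)` of the Mafia Hitting Set Game,
`M` is a hitting set and its cost is at most `d` times the cost of any hitting set
(price of anarchy at most `d`). -/
theorem stmt_15 (d : ℕ) (hd : 2 ≤ d) (E : Finset (Finset V))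
    (hunif : ∀ S ∈ E, S.card = d)
    (c : V → ℝ) (hc : ∀ v, 0 ≤ c v) (T : ℝ) (hT : 2 * ∑ v, c v < T)
    (M : Finset V) (r : V → Finset V → ℝ)
    (hnash : IsNashEq d E c T M r) :
    (∀ S ∈ E, (M ∩ S).Nonempty) ∧
      ∀ Mstar : Finset V, (∀ S ∈ E, (Mstar ∩ S).Nonempty) →
        ∑ v ∈ M, c v ≤ d * ∑ v ∈ Mstar, c v := by
  refine ⟨hnash.isHittingSet hd hunif hc hT, fun Mstar hMstar => ?_⟩
  calc ∑ v ∈ M, c v = ∑ S ∈ E, clubRansom r S := hnash.1.sum_cost_eq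
    _ ≤ ∑ w ∈ Mstar, clubLoad E r w := sum_clubRansom_le_sum_clubLoad hMstar hnash.1.1
    _ ≤ ∑ w ∈ Mstar, d * c w := sum_le_sum fun w _ => hnash.clubLoad_le hd hunif hc hT w
    _ = d * ∑ w ∈ Mstar, c w := (mul_sum _ _ _).symm

end

end MafiaHS
end

section
/- Let (V, 𝓔) be a finite hypergraph with every hyperedge nonempty of size at most d, let C : 2^V → ℝ be a monotone submodular set function with C(∅) = 0, and let (M, y) be a complementary pair. Then C(M) ≤ d·∑_{S∈𝓔} y(S), and consequently C(M) ≤ d·C(M') for every hitting set M'; that is, M is a d-approximate solution of the submodular hitting set problem. -/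
/-!
Double counting gives `∑_{u ∈ Z} z u = ∑_{S ∈ 𝓔} |Z ∩ S| · y S` for every `Z`. For `Z = M`,
tightness turns the left side into `C M`, and `|M ∩ S| ≤ d` bounds it by `d · ∑ y`. For a
hitting set `M'` one has `|M' ∩ S| ≥ 1`, so `∑ y ≤ ∑_{u ∈ M'} z u ≤ C M'` by feasibility.
-/

open Finset

section Load

variable {α : Type*} [DecidableEq α] (E : Finset (Finset α)) (Z : Finset α)

theorem sum_sum_filter_mem_eq_sum_card_inter_smul {β : Type*} [AddCommMonoid β]
    (f : Finset α → β) :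
    ∑ u ∈ Z, ∑ S ∈ E.filter (fun S => u ∈ S), f S = ∑ S ∈ E, #(Z ∩ S) • f S := by
  rw [Finset.sum_comm' (t' := E) (s' := fun S => Z ∩ S) (fun u S => by
    simp only [mem_filter, mem_inter]; tauto)]
  exact sum_congr rfl fun S _ => sum_const _

variable {R : Type*} [Semiring R] [PartialOrder R] [IsOrderedRing R]
  {y : Finset α → R}

theorem sum_sum_filter_mem_le_mul_sum (hy : ∀ S ∈ E, 0 ≤ y S) {d : ℕ}
    (hcard : ∀ S ∈ E, #S ≤ d) :
    ∑ u ∈ Z, ∑ S ∈ E.filter (fun S => u ∈ S), y S ≤ d * ∑ S ∈ E, y S := by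
  rw [sum_sum_filter_mem_eq_sum_card_inter_smul, mul_sum]
  refine sum_le_sum fun S hS => ?_
  rw [nsmul_eq_mul]
  have : #(Z ∩ S) ≤ d := (card_le_card inter_subset_right).trans (hcard S hS)
  gcongr
  exact hy S hS

theorem sum_le_sum_sum_filter_mem_of_forall_inter_nonempty (hy : ∀ S ∈ E, 0 ≤ y S)
    (hZ : ∀ S ∈ E, (Z ∩ S).Nonempty) :
    ∑ S ∈ E, y S ≤ ∑ u ∈ Z, ∑ S ∈ E.filter (fun S => u ∈ S), y S := by
  rw [sum_sum_filter_mem_eq_sum_card_inter_smul]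
  exact sum_le_sum fun S hS => le_smul_of_one_le_left (hy S hS) (card_pos.mpr (hZ S hS))

end Load

theorem stmt_16_general {V : Type*} [DecidableEq V]
    (d : ℕ) (E : Finset (Finset V))
    (hE : ∀ S ∈ E, S.Nonempty ∧ S.card ≤ d)
    (C : Finset V → ℝ)
    (M : Finset V) (y : Finset V → ℝ)
    (hy0 : ∀ S, 0 ≤ y S)
    (hyfeas : ∀ Z : Finset V, ∑ u ∈ Z, (∑ S ∈ E.filter (fun S => u ∈ S), y S) ≤ C Z)
    (htight : ∑ u ∈ M, (∑ S ∈ E.filter (fun S => u ∈ S), y S) = C M) :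
    (C M ≤ d * ∑ S ∈ E, y S) ∧
      ∀ M' : Finset V, (∀ S ∈ E, (M' ∩ S).Nonempty) → C M ≤ d * C M' := by
  have hy : ∀ S ∈ E, 0 ≤ y S := fun S _ => hy0 S
  have hC : C M ≤ d * ∑ S ∈ E, y S :=
    htight ▸ sum_sum_filter_mem_le_mul_sum E M hy fun S hS => (hE S hS).2
  refine ⟨hC, fun M' hM' => hC.trans ?_⟩
  have hdual : ∑ S ∈ E, y S ≤ C M' :=
    (sum_le_sum_sum_filter_mem_of_forall_inter_nonempty E M' hy hM').trans (hyfeas M')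
  exact mul_le_mul_of_nonneg_left hdual (Nat.cast_nonneg d)

/-- let `(V, 𝓔)` be a finite hypergraph whose hyperedges are nonempty of size
at most `d`, and let `C` be a monotone submodular set function with `C ∅ = 0`.  If `(M, y)`
is a complementary pair (a hitting set `M` and a feasible dual `y` with
`∑_{u∈Z} z u ≤ C Z` for all `Z`, where `z u = ∑_{S ∋ u} y S`, and `∑_{u∈M} z u = C M`),
then `C M ≤ d·∑_{S∈𝓔} y S`, and consequently `C M ≤ d·C M'` for every hitting set `M'`. -/
theorem stmt_16 {V : Type*} [Fintype V] [DecidableEq V]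
    (d : ℕ) (E : Finset (Finset V))
    (hE : ∀ S ∈ E, S.Nonempty ∧ S.card ≤ d)
    (C : Finset V → ℝ)
    (hmono : ∀ ⦃X Y : Finset V⦄, X ⊆ Y → C X ≤ C Y)
    (hsub : ∀ X Y : Finset V, C (X ∩ Y) + C (X ∪ Y) ≤ C X + C Y)
    (hempty : C ∅ = 0)
    (M : Finset V) (y : Finset V → ℝ)
    (hM : ∀ S ∈ E, (M ∩ S).Nonempty)
    (hy0 : ∀ S, 0 ≤ y S)
    (hyfeas : ∀ Z : Finset V, ∑ u ∈ Z, (∑ S ∈ E.filter (fun S => u ∈ S), y S) ≤ C Z)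
    (htight : ∑ u ∈ M, (∑ S ∈ E.filter (fun S => u ∈ S), y S) = C M) :
    (C M ≤ d * ∑ S ∈ E, y S) ∧
      ∀ M' : Finset V, (∀ S ∈ E, (M' ∩ S).Nonempty) → C M ≤ d * C M' :=
  stmt_16_general d E hE C M y hy0 hyfeas htight
end

section
/- Let (V, 𝓔) be a finite hypergraph with every hyperedge nonempty, and let C : 2^V → ℝ be a monotone submodular set function with C(∅) = 0. Then there exists a complementary pair (M, y); that is, there exist a hitting set M and a feasible dual solution y with ∑_{u∈M} z(u) = C(M), where z(u) = ∑_{S : u∈S} y(S). (This is the output of the Iwata–Nagano primal-dual algorithm.) -/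
/-!
Start from the dual `y = 0` and raise one dual variable at a time. For a feasible `y` the tight
sets (those `Z` with `∑_{u∈Z} z u = C Z`) are closed under union by submodularity, so there is a
largest tight set `M`. If some hyperedge `S` misses `M`, every set meeting `S` has positive slack,
and raising `y S` by the least slack per element of `S` keeps `y` feasible, keeps `M` tight and
makes a set meeting `S` tight. The largest tight set therefore strictly grows, so the process stops
with a largest tight set hitting every hyperedge, which together with `y` is a complementary pair.
-/

open Finset

section TightSets

variable {V : Type*} [DecidableEq V] {C : Finset V → ℝ} {w : V → ℝ}

variable (C w) in
def IsTight (Z : Finset V) : Prop := ∑ u ∈ Z, w u = C Z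

theorem IsTight.union (hsub : ∀ X Y : Finset V, C (X ∩ Y) + C (X ∪ Y) ≤ C X + C Y)
    (hw : ∀ Z, ∑ u ∈ Z, w u ≤ C Z) {X Y : Finset V} (hX : IsTight C w X) (hY : IsTight C w Y) :
    IsTight C w (X ∪ Y) := by
  have hmod : ∑ u ∈ X ∪ Y, w u + ∑ u ∈ X ∩ Y, w u = ∑ u ∈ X, w u + ∑ u ∈ Y, w u :=
    sum_union_inter
  rw [IsTight] at hX hY ⊢
  linarith [hsub X Y, hw (X ∩ Y), hw (X ∪ Y)]

theorem sum_add_ite_mem (Z S : Finset V) (ε : ℝ) :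
    ∑ u ∈ Z, (w u + if u ∈ S then ε else 0) = ∑ u ∈ Z, w u + #(Z ∩ S) * ε := by
  rw [sum_add_distrib, sum_ite_mem, sum_const, nsmul_eq_mul]

theorem IsTight.add_ite_mem {Z S : Finset V} (hZ : IsTight C w Z) (hZS : Z ∩ S = ∅) (ε : ℝ) :
    IsTight C (fun u => w u + if u ∈ S then ε else 0) Z := by
  simpa [IsTight, sum_add_ite_mem, hZS] using hZ

variable [Fintype V]

variable (C w) in
open Classical in
noncomputable def maxTightSet : Finset V := ({Z | IsTight C w Z} : Finset (Finset V)).sup id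

theorem subset_maxTightSet {Z : Finset V} (hZ : IsTight C w Z) : Z ⊆ maxTightSet C w := by
  classical
  exact le_sup (f := id) (mem_filter.mpr ⟨mem_univ Z, hZ⟩)

theorem isTight_maxTightSet (hsub : ∀ X Y : Finset V, C (X ∩ Y) + C (X ∪ Y) ≤ C X + C Y)
    (hempty : C ∅ = 0) (hw : ∀ Z, ∑ u ∈ Z, w u ≤ C Z) : IsTight C w (maxTightSet C w) := by
  classical
  refine sup_induction (p := IsTight C w) (by simp [IsTight, hempty])
    (fun X hX Y hY => hX.union hsub hw hY) fun Z hZ => (mem_filter.mp hZ).2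

/-- Raising `w` uniformly on `S` by the least slack per element of `S` over the sets meeting `S`. -/
theorem exists_raise_feasible_meets (hw : ∀ Z, ∑ u ∈ Z, w u ≤ C Z) {S : Finset V}
    (hS : S.Nonempty) (hMS : maxTightSet C w ∩ S = ∅) :
    ∃ ε > 0, (∀ Z, ∑ u ∈ Z, (w u + if u ∈ S then ε else 0) ≤ C Z) ∧
      (maxTightSet C (fun u => w u + if u ∈ S then ε else 0) ∩ S).Nonempty := by
  set P : Finset (Finset V) := {Z | (Z ∩ S).Nonempty}
  have hP : P.Nonempty := ⟨S, by simpa [P] using hS⟩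
  set slack : Finset V → ℝ := fun Z => (C Z - ∑ u ∈ Z, w u) / #(Z ∩ S)
  have hslack : ∀ Z ∈ P, 0 < slack Z := by
    intro Z hZ
    have hZS : (Z ∩ S).Nonempty := (mem_filter.mp hZ).2
    have hlt : ∑ u ∈ Z, w u < C Z := by
      refine (hw Z).lt_of_ne fun hZ_tight => hZS.ne_empty ?_
      exact subset_empty.mp (hMS ▸ inter_subset_inter_right (subset_maxTightSet hZ_tight))
    exact div_pos (by linarith) (by exact_mod_cast hZS.card_pos)
  refine ⟨P.inf' hP slack, (lt_inf'_iff hP).mpr hslack, fun Z => ?_, ?_⟩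
  · rw [sum_add_ite_mem]
    rcases (Z ∩ S).eq_empty_or_nonempty with hZS | hZS
    · simpa [hZS] using hw Z
    · have hle := inf'_le slack (show Z ∈ P by simpa [P] using hZS)
      have hcard : (0 : ℝ) < #(Z ∩ S) := by exact_mod_cast hZS.card_pos
      have := (le_div_iff₀ hcard).mp hle
      linarith
  · obtain ⟨Z₀, hZ₀, hmin⟩ := exists_mem_eq_inf' hP slack
    have hZ₀S : (Z₀ ∩ S).Nonempty := (mem_filter.mp hZ₀).2
    have hcard : (#(Z₀ ∩ S) : ℝ) ≠ 0 := by exact_mod_cast hZ₀S.card_pos.ne'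
    have htight : IsTight C (fun u => w u + if u ∈ S then P.inf' hP slack else 0) Z₀ := by
      rw [IsTight, sum_add_ite_mem, hmin, mul_div_cancel₀ _ hcard]
      ring
    exact hZ₀S.mono (inter_subset_inter_right (subset_maxTightSet htight))

end TightSets

section HittingSet

variable {V : Type*} [DecidableEq V] (E : Finset (Finset V))

/-- The vertex load `z` induced by the dual `y`. -/
noncomputable def dualLoad (y : Finset V → ℝ) (u : V) : ℝ := ∑ S ∈ E.filter (fun S => u ∈ S), y S

variable {E}

theorem dualLoad_add_single {S : Finset V} (hS : S ∈ E) (y : Finset V → ℝ) (ε : ℝ) (u : V) :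
    dualLoad E (y + Pi.single S ε) u = dualLoad E y u + if u ∈ S then ε else 0 := by
  simp [dualLoad, sum_add_distrib, sum_pi_single', hS]

theorem exists_complementary_of_feasible [Fintype V] (hE : ∀ S ∈ E, S.Nonempty)
    {C : Finset V → ℝ} (hsub : ∀ X Y : Finset V, C (X ∩ Y) + C (X ∪ Y) ≤ C X + C Y)
    (hempty : C ∅ = 0)
    (y : Finset V → ℝ) (hy : ∀ S, 0 ≤ y S) (hfeas : ∀ Z, ∑ u ∈ Z, dualLoad E y u ≤ C Z) :
    ∃ (M : Finset V) (y : Finset V → ℝ), (∀ S ∈ E, (M ∩ S).Nonempty) ∧ (∀ S, 0 ≤ y S) ∧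
      (∀ Z, ∑ u ∈ Z, dualLoad E y u ≤ C Z) ∧ IsTight C (dualLoad E y) M := by
  induction hn : #(maxTightSet C (dualLoad E y))ᶜ using Nat.strong_induction_on
    generalizing y with
  | _ n ih =>
    set M := maxTightSet C (dualLoad E y)
    have hM : IsTight C (dualLoad E y) M := isTight_maxTightSet hsub hempty hfeas
    by_cases hhit : ∀ S ∈ E, (M ∩ S).Nonempty
    · exact ⟨M, y, hhit, hy, hfeas, hM⟩
    push Not at hhit
    obtain ⟨S, hSE, hMS⟩ := hhit
    obtain ⟨ε, hε, hfeas', hmeet⟩ := exists_raise_feasible_meets hfeas (hE S hSE) hMS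
    have hload :
        dualLoad E (y + Pi.single S ε) = fun u => dualLoad E y u + if u ∈ S then ε else 0 :=
      funext (dualLoad_add_single hSE y ε)
    rw [← hload] at hfeas' hmeet
    have hgrow : M ⊂ maxTightSet C (dualLoad E (y + Pi.single S ε)) := by
      refine ssubset_of_subset_not_subset (subset_maxTightSet (hload ▸ hM.add_ite_mem hMS ε)) ?_
      intro hsubset
      obtain ⟨v, hv⟩ := hmeet
      exact notMem_empty v (hMS ▸ inter_subset_inter_right hsubset hv)
    have hy' : 0 ≤ y + Pi.single S ε := add_nonneg hy (Pi.single_nonneg.mpr hε.le)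
    exact ih _ (hn ▸ card_lt_card (compl_ssubset_compl.mpr hgrow)) _ hy' hfeas' rfl

end HittingSet

/-- for every finite hypergraph with nonempty hyperedges and every monotone
submodular set function `C` with `C ∅ = 0`, there exists a complementary pair: a hitting
set `M` and a feasible dual `y` (nonnegative, with `∑_{u∈Z} z u ≤ C Z` for all `Z`, where
`z u = ∑_{S ∋ u} y S`) such that `∑_{u∈M} z u = C M`. -/
theorem stmt_17 {V : Type*} [Fintype V] [DecidableEq V]
    (E : Finset (Finset V))
    (hE : ∀ S ∈ E, S.Nonempty)
    (C : Finset V → ℝ)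
    (hmono : ∀ ⦃X Y : Finset V⦄, X ⊆ Y → C X ≤ C Y)
    (hsub : ∀ X Y : Finset V, C (X ∩ Y) + C (X ∪ Y) ≤ C X + C Y)
    (hempty : C ∅ = 0) :
    ∃ (M : Finset V) (y : Finset V → ℝ),
      (∀ S ∈ E, (M ∩ S).Nonempty) ∧
      (∀ S, 0 ≤ y S) ∧
      (∀ Z : Finset V, ∑ u ∈ Z, (∑ S ∈ E.filter (fun S => u ∈ S), y S) ≤ C Z) ∧
      ∑ u ∈ M, (∑ S ∈ E.filter (fun S => u ∈ S), y S) = C M := by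
  have hzero : ∀ Z, ∑ u ∈ Z, dualLoad E 0 u ≤ C Z := fun Z => by
    simpa [dualLoad, hempty] using hmono (empty_subset Z)
  exact exists_complementary_of_feasible hE hsub hempty 0 (fun _ => le_rfl) hzero
end

section
/- Let (M, y) be a complementary pair for the submodular hitting set instance, set z(u) = ∑_{S : u∈S} y(S), and let c̃ be a vector in the submodular base polyhedron B(C) with c̃(u) ≥ z(u) for all u ∈ V and c̃(u) = z(u) for all u ∈ M. Consider the strategy profile of the Submodular Mafia Hitting Set Game in which the Godfather plays c̃, M is the set of mafiosi, C = V∖M are civilians, and the normalized ransoms of each mafioso m are chosen so that the actual ransom paid on each club S containing m is r(m,S) = r₀(m,S)·c̃(m) = y(S). Then this strategy profile is a pure Nash equilibrium. -/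
/-!
Since every mafioso charges exactly `y S` on each of his clubs, the demand on any vertex `u` is at
most `∑_{S ∋ u} y S ≤ c̃ u`. Hence nobody is protected, each mafioso collects exactly his budget
and pays his whole demand, and every vertex ends up with utility `-D(v)`; civilians pay no
penalty because `M` is a hitting set. A unilateral deviation of `v` does not change the demand on
`v`, and a mafioso can never collect more than his budget, so the deviation yields at most
`-min (D v) (c̃ v) = -D v`. The Godfather earns `∑_{v ∈ M} c̃ v = C M`, which no vector of `B(C)`
can exceed on `M`.
-/

open Finset
open scoped Classical

namespace MafiaSub

variable {V : Type*} [Fintype V] [DecidableEq V]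

noncomputable section

/-- `ct` lies in the submodular base polyhedron `B(C)`:
nonnegative, `∑_{u∈Z} ct u ≤ C Z` for every proper subset `Z ⊊ V`, and
`∑_{u∈V} ct u = C V`. -/
def InBase (C : Finset V → ℝ) (ct : V → ℝ) : Prop :=
  (∀ v, 0 ≤ ct v) ∧
  (∀ Z : Finset V, Z ≠ Finset.univ → ∑ u ∈ Z, ct u ≤ C Z) ∧
  ∑ u : V, ct u = C Finset.univ

/-- Valid normalized ransoms: nonnegative, `r₀ m S = 0` unless `m` is a mafioso belonging
to the club `S ∈ 𝓔`, and every mafioso's normalized ransoms sum to `1`. -/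
def ValidR0 (E : Finset (Finset V)) (M : Finset V) (r₀ : V → Finset V → ℝ) : Prop :=
  (∀ m S, 0 ≤ r₀ m S) ∧
  (∀ m S, m ∉ M ∨ m ∉ S ∨ S ∉ E → r₀ m S = 0) ∧
  (∀ m ∈ M, ∑ S ∈ E.filter (fun S => m ∈ S), r₀ m S = 1)

/-- The demand `D(v) = (1/(d-1)) ∑_{S ∋ v} ∑_{m ∈ (M∩S)∖{v}} r(m,S)` asked from agent `v`,
where `r` are the actual ransoms. -/
def demand (d : ℕ) (E : Finset (Finset V)) (M : Finset V)
    (r : V → Finset V → ℝ) (v : V) : ℝ :=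
  (1 / ((d : ℝ) - 1)) * ∑ S ∈ E.filter (fun S => v ∈ S), ∑ m ∈ (M ∩ S).erase v, r m S

/-- Utility of a vertex agent `v`, with budgets `ct` and actual ransoms `r`
(as in the Mafia Hitting Set Game). -/
def vertexUtility (d : ℕ) (E : Finset (Finset V)) (ct : V → ℝ) (T : ℝ)
    (M : Finset V) (r : V → Finset V → ℝ) (v : V) : ℝ :=
  if v ∈ M then
    -ct v +
      (∑ S ∈ E.filter (fun S => v ∈ S),
        (r v S / ((d : ℝ) - 1)) *
          ((((S.filter fun u => ¬(u ∈ M ∧ ct u < demand d E M r u)).erase v).card : ℝ) +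
            ∑ u ∈ (S.filter fun u => u ∈ M ∧ ct u < demand d E M r u).erase v,
              ct u / demand d E M r u)) -
      min (demand d E M r v) (ct v)
  else
    -demand d E M r v - (if ∃ S ∈ E, v ∈ S ∧ M ∩ S = ∅ then T else 0)

/-- `(M', r₀')` is a unilateral deviation of vertex agent `v` from `(M, r₀)`. -/
def Deviation (v : V) (M M' : Finset V) (r₀ r₀' : V → Finset V → ℝ) : Prop :=
  (∀ u, u ≠ v → (u ∈ M' ↔ u ∈ M)) ∧ ∀ u S, u ≠ v → r₀' u S = r₀ u S

/-- `(M, ct, r₀)` is a pure Nash equilibrium of the Submodular Mafia Hitting Set Game: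
the profile is valid (the Godfather's budget vector `ct` lies in `B(C)` and the normalized
ransoms are valid), no vertex agent can strictly increase his utility by a unilateral
deviation, and the Godfather cannot strictly increase his utility `∑_{v∈M} ct v` by choosing
another budget vector in `B(C)`. -/
def IsNashEq (d : ℕ) (E : Finset (Finset V)) (C : Finset V → ℝ) (T : ℝ)
    (ct : V → ℝ) (M : Finset V) (r₀ : V → Finset V → ℝ) : Prop :=
  InBase C ct ∧ ValidR0 E M r₀ ∧
  (∀ (v : V) (M' : Finset V) (r₀' : V → Finset V → ℝ),
      ValidR0 E M' r₀' → Deviation v M M' r₀ r₀' →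
        vertexUtility d E ct T M' (fun m S => r₀' m S * ct m) v ≤
          vertexUtility d E ct T M (fun m S => r₀ m S * ct m) v) ∧
  (∀ ct' : V → ℝ, InBase C ct' → ∑ v ∈ M, ct' v ≤ ∑ v ∈ M, ct v)

end
end MafiaSub

namespace MafiaSub

section

variable {V : Type*} [Fintype V] {C : Finset V → ℝ} {ct : V → ℝ}

theorem InBase.sum_le (h : InBase C ct) (Z : Finset V) : ∑ u ∈ Z, ct u ≤ C Z := by
  by_cases hZ : Z = univ
  · exact hZ ▸ h.2.2.le
  · exact h.2.1 Z hZ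

theorem InBase.nonneg_univ (h : InBase C ct) : 0 ≤ C univ :=
  h.2.2 ▸ sum_nonneg fun u _ => h.1 u

end

section

variable {V : Type*} [DecidableEq V] {d : ℕ} {E : Finset (Finset V)} {M : Finset V}
  {ct : V → ℝ} {T : ℝ} {r : V → Finset V → ℝ} {r₀ : V → Finset V → ℝ} {v : V}

theorem ValidR0.sum_ransom_eq (hr₀ : ValidR0 E M r₀) (hv : v ∈ M) :
    ∑ S ∈ E.filter (fun S => v ∈ S), r₀ v S * ct v = ct v := by
  rw [← sum_mul, hr₀.2.2 v hv, one_mul]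

theorem cast_card_erase_of_card_eq {S : Finset V} (hv : v ∈ S) (hS : S.card = d) :
    ((S.erase v).card : ℝ) = d - 1 := by
  have hd : 0 < d := hS ▸ card_pos.2 ⟨v, hv⟩
  rw [card_erase_of_mem hv, hS, Nat.cast_pred hd]

theorem demand_le_sum_of_ransom_le (hd : 1 < d) (hunif : ∀ S ∈ E, S.card = d)
    {y : Finset V → ℝ} (hy : ∀ S, 0 ≤ y S) (hr : ∀ S ∈ E, ∀ m ∈ M ∩ S, r m S ≤ y S) (u : V) :
    demand d E M r u ≤ ∑ S ∈ E.filter (fun S => u ∈ S), y S := by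
  have hd1 : (0 : ℝ) < d - 1 := sub_pos.2 (Nat.one_lt_cast.2 hd)
  rw [demand, one_div, inv_mul_le_iff₀ hd1, mul_sum]
  refine sum_le_sum fun S hS => ?_
  obtain ⟨hSE, huS⟩ := mem_filter.1 hS
  calc ∑ m ∈ (M ∩ S).erase u, r m S
      ≤ ((M ∩ S).erase u).card • y S :=
        sum_le_card_nsmul _ _ _ fun m hm => hr S hSE m (mem_of_mem_erase hm)
    _ ≤ ((S.erase u).card : ℝ) * y S := by
        rw [nsmul_eq_mul]
        gcongr
        · exact hy S
        · exact inter_subset_right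
    _ = (d - 1) * y S := by rw [cast_card_erase_of_card_eq huS (hunif S hSE)]

theorem demand_eq_of_deviation {M' : Finset V} {r₀' : V → Finset V → ℝ}
    (hdev : Deviation v M M' r₀ r₀') :
    demand d E M' (fun m S => r₀' m S * ct m) v = demand d E M (fun m S => r₀ m S * ct m) v := by
  have hset : ∀ S : Finset V, (M' ∩ S).erase v = (M ∩ S).erase v := fun S => by
    ext u
    simp only [mem_erase, mem_inter, and_congr_right_iff]
    exact fun hu => and_congr_left' (hdev.1 u hu)
  unfold demand
  congr 1
  refine sum_congr rfl fun S _ => ?_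
  rw [hset]
  exact sum_congr rfl fun m hm => by dsimp only; rw [hdev.2 m S (ne_of_mem_erase hm)]

theorem card_filter_not_erase_add_sum_le (S : Finset V) (p : V → Prop) [DecidablePred p]
    (f : V → ℝ) (hf : ∀ u ∈ S, p u → f u ≤ 1) :
    (((S.filter fun u => ¬p u).erase v).card : ℝ) + ∑ u ∈ (S.filter p).erase v, f u ≤
      (S.erase v).card := by
  have hsum : ∑ u ∈ (S.filter p).erase v, f u ≤ ((S.filter p).erase v).card := by
    simpa using sum_le_card_nsmul _ f 1 fun u hu =>
      (mem_filter.1 (mem_of_mem_erase hu)).elim (hf u)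
  have hcard : ((S.filter fun u => ¬p u).erase v).card + ((S.filter p).erase v).card =
      (S.erase v).card := by
    rw [← filter_erase, ← filter_erase, add_comm, card_filter_add_card_filter_not]
  rw [← hcard, Nat.cast_add]
  linarith

/-- The paper's `F⁺(v)`, the ransom income of a mafioso `v`. -/
noncomputable def ransomIncome (d : ℕ) (E : Finset (Finset V)) (ct : V → ℝ) (M : Finset V)
    (r : V → Finset V → ℝ) (v : V) : ℝ :=
  ∑ S ∈ E.filter (fun S => v ∈ S),
    (r v S / ((d : ℝ) - 1)) *
      ((((S.filter fun u => ¬(u ∈ M ∧ ct u < demand d E M r u)).erase v).card : ℝ) +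
        ∑ u ∈ (S.filter fun u => u ∈ M ∧ ct u < demand d E M r u).erase v,
          ct u / demand d E M r u)

theorem vertexUtility_of_mem (hv : v ∈ M) :
    vertexUtility d E ct T M r v =
      -ct v + ransomIncome d E ct M r v - min (demand d E M r v) (ct v) :=
  if_pos hv

theorem vertexUtility_of_not_mem (hv : v ∉ M) :
    vertexUtility d E ct T M r v =
      -demand d E M r v - if ∃ S ∈ E, v ∈ S ∧ M ∩ S = ∅ then T else 0 :=
  if_neg hv

theorem ransomIncome_le (hd : 1 < d) (hunif : ∀ S ∈ E, S.card = d) (hct : ∀ u, 0 ≤ ct u)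
    (hr : ∀ S, 0 ≤ r v S) :
    ransomIncome d E ct M r v ≤ ∑ S ∈ E.filter (fun S => v ∈ S), r v S := by
  have hd1 : (0 : ℝ) < d - 1 := sub_pos.2 (Nat.one_lt_cast.2 hd)
  refine sum_le_sum fun S hS => ?_
  obtain ⟨hSE, hvS⟩ := mem_filter.1 hS
  have hshare := card_filter_not_erase_add_sum_le (v := v) S
    (fun u => u ∈ M ∧ ct u < demand d E M r u) (fun u => ct u / demand d E M r u)
    fun u _ hu => div_le_one_of_le₀ hu.2.le ((hct u).trans hu.2.le)
  rw [cast_card_erase_of_card_eq hvS (hunif S hSE)] at hshare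
  calc _ ≤ r v S / (d - 1) * (d - 1) := by gcongr; exact div_nonneg (hr S) hd1.le
    _ = r v S := div_mul_cancel₀ _ hd1.ne'

theorem ransomIncome_eq_of_demand_le (hd : 1 < d) (hunif : ∀ S ∈ E, S.card = d)
    (hdem : ∀ u, demand d E M r u ≤ ct u) :
    ransomIncome d E ct M r v = ∑ S ∈ E.filter (fun S => v ∈ S), r v S := by
  have hd1 : (0 : ℝ) < d - 1 := sub_pos.2 (Nat.one_lt_cast.2 hd)
  refine sum_congr rfl fun S hS => ?_
  obtain ⟨hSE, hvS⟩ := mem_filter.1 hS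
  have hunprotected : ∀ u ∈ S, ¬(u ∈ M ∧ ct u < demand d E M r u) :=
    fun u _ hu => (hdem u).not_gt hu.2
  rw [filter_false_of_mem hunprotected, filter_true_of_mem hunprotected, erase_empty, sum_empty,
    add_zero, cast_card_erase_of_card_eq hvS (hunif S hSE), div_mul_cancel₀ _ hd1.ne']

theorem vertexUtility_le_neg_min (hd : 1 < d) (hunif : ∀ S ∈ E, S.card = d)
    (hct : ∀ u, 0 ≤ ct u) (hT : 0 ≤ T) (hr₀ : ValidR0 E M r₀) :
    vertexUtility d E ct T M (fun m S => r₀ m S * ct m) v ≤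
      -min (demand d E M (fun m S => r₀ m S * ct m) v) (ct v) := by
  by_cases hv : v ∈ M
  · have hincome := (ransomIncome_le (M := M) (r := fun m S => r₀ m S * ct m) hd hunif hct
      fun S => mul_nonneg (hr₀.1 v S) (hct v)).trans_eq (hr₀.sum_ransom_eq hv)
    rw [vertexUtility_of_mem hv]
    linarith
  · have hpen : (0 : ℝ) ≤ if ∃ S ∈ E, v ∈ S ∧ M ∩ S = ∅ then T else 0 := by
      split_ifs <;> simp [hT]
    rw [vertexUtility_of_not_mem hv]
    linarith [min_le_left (demand d E M (fun m S => r₀ m S * ct m) v) (ct v)]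

theorem vertexUtility_eq_neg_demand (hd : 1 < d) (hunif : ∀ S ∈ E, S.card = d)
    (hM : ∀ S ∈ E, (M ∩ S).Nonempty) (hr₀ : ValidR0 E M r₀)
    (hdem : ∀ u, demand d E M (fun m S => r₀ m S * ct m) u ≤ ct u) :
    vertexUtility d E ct T M (fun m S => r₀ m S * ct m) v =
      -demand d E M (fun m S => r₀ m S * ct m) v := by
  by_cases hv : v ∈ M
  · rw [vertexUtility_of_mem hv, ransomIncome_eq_of_demand_le hd hunif hdem,
      hr₀.sum_ransom_eq hv, min_eq_left (hdem v)]
    ring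
  · have hunpenalized : ¬∃ S ∈ E, v ∈ S ∧ M ∩ S = ∅ :=
      fun ⟨S, hSE, _, hMS⟩ => (hM S hSE).ne_empty hMS
    rw [vertexUtility_of_not_mem hv, if_neg hunpenalized, sub_zero]

end

variable {V : Type*} [Fintype V] [DecidableEq V]

theorem stmt_18_general (d : ℕ) (hd : 2 ≤ d) (E : Finset (Finset V))
    (hunif : ∀ S ∈ E, S.card = d)
    (C : Finset V → ℝ)
    (T : ℝ) (hT : 2 * C Finset.univ < T)
    (M : Finset V) (y : Finset V → ℝ)
    (hM : ∀ S ∈ E, (M ∩ S).Nonempty)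
    (hy0 : ∀ S, 0 ≤ y S)
    (htight : ∑ u ∈ M, (∑ S ∈ E.filter (fun S => u ∈ S), y S) = C M)
    (ct : V → ℝ) (hbase : InBase C ct)
    (hct_ge : ∀ u : V, ∑ S ∈ E.filter (fun S => u ∈ S), y S ≤ ct u)
    (hct_eq : ∀ u ∈ M, ct u = ∑ S ∈ E.filter (fun S => u ∈ S), y S)
    (r₀ : V → Finset V → ℝ) (hr₀ : ValidR0 E M r₀)
    (hransom : ∀ m ∈ M, ∀ S ∈ E, m ∈ S → r₀ m S * ct m = y S) :
    IsNashEq d E C T ct M r₀ := by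
  have hdem (u : V) : demand d E M (fun m S => r₀ m S * ct m) u ≤ ct u :=
    (demand_le_sum_of_ransom_le hd hunif hy0 (fun S hS m hm =>
      (hransom m (mem_inter.1 hm).1 S hS (mem_inter.1 hm).2).le) u).trans (hct_ge u)
  have hT0 : 0 ≤ T := by linarith [hbase.nonneg_univ]
  refine ⟨hbase, hr₀, fun v M' r₀' hr₀' hdev => ?_, fun ct' hct' => ?_⟩
  · calc _ ≤ -min (demand d E M' (fun m S => r₀' m S * ct m) v) (ct v) :=
          vertexUtility_le_neg_min hd hunif hbase.1 hT0 hr₀'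
      _ = -demand d E M (fun m S => r₀ m S * ct m) v := by
          rw [demand_eq_of_deviation hdev, min_eq_left (hdem v)]
      _ = _ := (vertexUtility_eq_neg_demand hd hunif hM hr₀ hdem).symm
  · calc ∑ v ∈ M, ct' v ≤ C M := hct'.sum_le M
      _ = ∑ v ∈ M, ct v := by rw [← htight]; exact sum_congr rfl fun u hu => (hct_eq u hu).symm

/-- let `(M, y)` be a complementary pair for the submodular hitting set
instance, `z u = ∑_{S ∋ u} y S`, and let `ct ∈ B(C)` with `ct ≥ z` everywhere and `ct = z`
on `M`.  If the normalized ransoms `r₀` are valid and chosen so that the actual ransom of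
each mafioso `m` on each club `S ∋ m` is `r₀(m,S)·ct(m) = y S`, then the strategy profile
`(M, ct, r₀)` is a pure Nash equilibrium of the Submodular Mafia Hitting Set Game. -/
theorem stmt_18 (d : ℕ) (hd : 2 ≤ d) (E : Finset (Finset V))
    (hunif : ∀ S ∈ E, S.card = d)
    (C : Finset V → ℝ)
    (hmono : ∀ ⦃X Y : Finset V⦄, X ⊆ Y → C X ≤ C Y)
    (hsub : ∀ X Y : Finset V, C (X ∩ Y) + C (X ∪ Y) ≤ C X + C Y)
    (hempty : C ∅ = 0)
    (T : ℝ) (hT : 2 * C Finset.univ < T)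
    (M : Finset V) (y : Finset V → ℝ)
    (hM : ∀ S ∈ E, (M ∩ S).Nonempty)
    (hy0 : ∀ S, 0 ≤ y S)
    (hyfeas : ∀ Z : Finset V, ∑ u ∈ Z, (∑ S ∈ E.filter (fun S => u ∈ S), y S) ≤ C Z)
    (htight : ∑ u ∈ M, (∑ S ∈ E.filter (fun S => u ∈ S), y S) = C M)
    (ct : V → ℝ) (hbase : InBase C ct)
    (hct_ge : ∀ u : V, ∑ S ∈ E.filter (fun S => u ∈ S), y S ≤ ct u)
    (hct_eq : ∀ u ∈ M, ct u = ∑ S ∈ E.filter (fun S => u ∈ S), y S)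
    (r₀ : V → Finset V → ℝ) (hr₀ : ValidR0 E M r₀)
    (hransom : ∀ m ∈ M, ∀ S ∈ E, m ∈ S → r₀ m S * ct m = y S) :
    IsNashEq d E C T ct M r₀ :=
  stmt_18_general d hd E hunif C T hT M y hM hy0 htight ct hbase hct_ge hct_eq r₀ hr₀ hransom

end MafiaSub
end
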